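/- arXiv:2507.16243 — 2 statements merged into one kernel-verified Lean document; each statement's English description precedes it below -/
import Mathlib

section
/- Let K be a field of characteristic zero, a ∈ lie_m^m and b ∈ lie_n^n tuples such that the tangential derivations D_a and D_b are special, i.e., D_a(x_1 + ⋯ + x_m) = 0 and D_b(x_1 + ⋯ + x_n) = 0, and let 1 ≤ i ≤ m. Then the composed tangential derivation is also special: D_{a∘_ib}(x_1 + x_2 + ⋯ + x_{m+n−1}) = 0. -/
open FreeLieAlgebra

variable (K : Type) [Field K] [CharZero K]

/-- The free Lie algebra over `K` on `N` generators `x_1, …, x_N`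
(indexed here 0-based by `Fin N`). -/
abbrev lieF (N : ℕ) : Type := FreeLieAlgebra K (Fin N)

/-- The `(k+1)`-st generator of `lieF K N` (0-based index `k`), junk value `0` out of range. -/
noncomputable def xg (N k : ℕ) : lieF K N :=
  if h : k < N then FreeLieAlgebra.of K (⟨k, h⟩ : Fin N) else 0

/-- The Lie algebra homomorphism `Φ_i : lie_m → lie_{m+n-1}` sending (0-based) `x_j ↦ x_j`
for `j < i`, `x_i ↦ x_i + x_{i+1} + ⋯ + x_{i+n-1}`, and `x_j ↦ x_{j+n-1}` for `j > i`. -/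
noncomputable def PhiL (m n i : ℕ) : lieF K m →ₗ⁅K⁆ lieF K (m + n - 1) :=
  FreeLieAlgebra.lift K fun j : Fin m =>
    if (j : ℕ) < i then xg K (m + n - 1) (j : ℕ)
    else if (j : ℕ) = i then ∑ t : Fin n, xg K (m + n - 1) (i + (t : ℕ))
    else xg K (m + n - 1) ((j : ℕ) + n - 1)

/-- The Lie algebra homomorphism `Ψ_i : lie_n → lie_{m+n-1}` sending (0-based)
`x_j ↦ x_{i+j}`. -/
noncomputable def PsiL (m n i : ℕ) : lieF K n →ₗ⁅K⁆ lieF K (m + n - 1) :=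
  FreeLieAlgebra.lift K fun j : Fin n => xg K (m + n - 1) (i + (j : ℕ))

/-- The partial composition `f ∘_i g := Φ_i(f) + Ψ_i(g)` of free Lie algebra elements
(the pivot `i` is 0-based). -/
noncomputable def compL {m n : ℕ} (f : lieF K m) (i : ℕ) (g : lieF K n) :
    lieF K (m + n - 1) :=
  PhiL K m n i f + PsiL K m n i g

/-- The canonical identification `lie_N ≅ lie_{N'}` for `N = N'`. -/
noncomputable def recastL {N N' : ℕ} (hNN : N = N') : lieF K N →ₗ⁅K⁆ lieF K N' :=
  FreeLieAlgebra.lift K fun j => FreeLieAlgebra.of K (Fin.cast hNN j)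

/-- The Lie algebra of derivations of `lie_N`. -/
abbrev DerL (N : ℕ) : Type := LieDerivation K (lieF K N) (lieF K N)

/-- Entry of a tuple at a natural-number index (junk value `0` out of range). -/
noncomputable def tget {N : ℕ} (a : Fin N → lieF K N) (k : ℕ) : lieF K N :=
  if h : k < N then a ⟨k, h⟩ else 0

/-- The composed tuple `a ∘_i b ∈ (lie_{m+n-1})^{m+n-1}` (0-based indices): its entries are
`Φ_i(a_j)` in slot `j` for `j < i`, `Φ_i(a_i) + Ψ_i(b_k)` in slot `i+k` for `0 ≤ k < n`,
and `Φ_i(a_j)` in slot `j+n-1` for `j > i`. -/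
noncomputable def compTup {m n : ℕ} (a : Fin m → lieF K m) (i : ℕ)
    (b : Fin n → lieF K n) : Fin (m + n - 1) → lieF K (m + n - 1) := fun k =>
  if (k : ℕ) < i then PhiL K m n i (tget K a (k : ℕ))
  else if (k : ℕ) < i + n then
    PhiL K m n i (tget K a i) + PsiL K m n i (tget K b ((k : ℕ) - i))
  else PhiL K m n i (tget K a ((k : ℕ) + 1 - n))

/-!
Since `D_a (x_1 + ⋯ + x_N) = ∑ₖ [x_k, a_k]`, a tangential derivation is special exactly when
`∑ₖ [x_k, a_k] = 0`. For the composed tuple this sum splits along the slots `j < i`,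
`i ≤ j < i + n` and `j ≥ i + n`; as `Φ_i x_i = x_i + ⋯ + x_{i+n-1}` and `Ψ_i x_k = x_{i+k}`, it
equals `Φ_i (∑ⱼ [x_j, a_j]) + Ψ_i (∑ₖ [x_k, b_k])`, which vanishes.
-/

theorem LieDerivation.map_sum_eq_sum_lie {R L ι : Type*} [CommRing R] [LieRing L]
    [LieAlgebra R L] [Fintype ι] (D : LieDerivation R L L) (x a : ι → L)
    (hD : ∀ k, D (x k) = ⁅x k, a k⁆) :
    D (∑ k, x k) = ∑ k, ⁅x k, a k⁆ := by
  rw [map_sum]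
  exact Finset.sum_congr rfl fun k _ => hD k

theorem Finset.sum_range_add_add {M : Type*} [AddCommMonoid M] (f : ℕ → M) (i n r : ℕ) :
    ∑ t ∈ range (i + n + r), f t =
      ∑ t ∈ range i, f t + ∑ t ∈ range n, f (i + t) + ∑ t ∈ range r, f (i + n + t) := by
  rw [sum_range_add, sum_range_add]

section Composition

omit [CharZero K]

variable {K}

open Finset

@[simp]
theorem xg_val {N : ℕ} (k : Fin N) : xg K N k = of K k := by
  simp [xg]

@[simp]
theorem tget_val {N : ℕ} (c : Fin N → lieF K N) (k : Fin N) : tget K c k = c k := by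
  simp [tget]

theorem sum_of_lie_eq_sum_range {N : ℕ} (c : Fin N → lieF K N) :
    ∑ k, ⁅of K k, c k⁆ = ∑ t ∈ range N, ⁅xg K N t, tget K c t⁆ := by
  rw [← Fin.sum_univ_eq_sum_range]
  simp

section Generators

variable {m n i t : ℕ}

theorem PhiL_xg_of_lt (ht : t < i) (htm : t < m) :
    PhiL K m n i (xg K m t) = xg K (m + n - 1) t := by
  simp [xg, htm, PhiL, ht]

theorem PhiL_xg_self (hi : i < m) :
    PhiL K m n i (xg K m i) = ∑ s ∈ range n, xg K (m + n - 1) (i + s) := by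
  rw [← Fin.sum_univ_eq_sum_range]
  simp [xg, hi, PhiL]

theorem PhiL_xg_of_gt (hit : i < t) (htm : t < m) :
    PhiL K m n i (xg K m t) = xg K (m + n - 1) (t + n - 1) := by
  simp [xg, htm, PhiL, hit.not_gt, hit.ne']

theorem PsiL_xg (ht : t < n) : PsiL K m n i (xg K n t) = xg K (m + n - 1) (i + t) := by
  simp [xg, ht, PsiL]

end Generators

section CompTup

variable {m n i : ℕ} (a : Fin m → lieF K m) (b : Fin n → lieF K n)

theorem tget_compTup_of_lt {t : ℕ} (ht : t < i) (hN : t < m + n - 1) :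
    tget K (compTup K a i b) t = PhiL K m n i (tget K a t) := by
  simp [tget, hN, compTup, ht]

theorem tget_compTup_add {s : ℕ} (hs : s < n) (hN : i + s < m + n - 1) :
    tget K (compTup K a i b) (i + s) =
      PhiL K m n i (tget K a i) + PsiL K m n i (tget K b s) := by
  simp [tget, hN, compTup, hs]

theorem tget_compTup_add_add {t : ℕ} (hN : i + n + t < m + n - 1) :
    tget K (compTup K a i b) (i + n + t) = PhiL K m n i (tget K a (i + 1 + t)) := by
  simp only [tget, hN, compTup, dite_true]
  rw [if_neg (by omega), if_neg (by omega), show i + n + t + 1 - n = i + 1 + t by omega]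

theorem PsiL_sum_of_lie :
    PsiL K m n i (∑ k, ⁅of K k, b k⁆) =
      ∑ s ∈ range n, ⁅xg K (m + n - 1) (i + s), PsiL K m n i (tget K b s)⁆ := by
  rw [sum_of_lie_eq_sum_range, map_sum]
  refine sum_congr rfl fun s hs => ?_
  rw [LieHom.map_lie, PsiL_xg (mem_range.mp hs)]

theorem PhiL_sum_of_lie {r : ℕ} (hm : m = i + 1 + r) :
    PhiL K m n i (∑ j, ⁅of K j, a j⁆) =
      ∑ t ∈ range i, ⁅xg K (m + n - 1) t, PhiL K m n i (tget K a t)⁆ +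
      ∑ s ∈ range n, ⁅xg K (m + n - 1) (i + s), PhiL K m n i (tget K a i)⁆ +
      ∑ t ∈ range r, ⁅xg K (m + n - 1) (i + n + t), PhiL K m n i (tget K a (i + 1 + t))⁆ := by
  subst hm
  rw [sum_of_lie_eq_sum_range, map_sum, sum_range_add_add, sum_range_one, add_zero,
    LieHom.map_lie, PhiL_xg_self (by omega), sum_lie]
  refine congrArg₂ (· + ·) (congrArg₂ (· + ·) ?_ rfl) ?_
  · refine sum_congr rfl fun t ht => ?_
    have ht := mem_range.mp ht
    rw [LieHom.map_lie, PhiL_xg_of_lt ht (by omega)]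
  · refine sum_congr rfl fun t ht => ?_
    have ht := mem_range.mp ht
    rw [LieHom.map_lie, PhiL_xg_of_gt (by omega) (by omega),
      show i + 1 + t + n - 1 = i + n + t by omega]

theorem sum_of_lie_compTup (hi : i < m) :
    ∑ k, ⁅of K k, compTup K a i b k⁆ =
      PhiL K m n i (∑ j, ⁅of K j, a j⁆) + PsiL K m n i (∑ k, ⁅of K k, b k⁆) := by
  obtain ⟨r, hm⟩ : ∃ r, m = i + 1 + r := ⟨m - (i + 1), by omega⟩
  have hN : range (m + n - 1) = range (i + n + r) := by congr 1; omega
  rw [sum_of_lie_eq_sum_range, hN, sum_range_add_add, PhiL_sum_of_lie a hm, PsiL_sum_of_lie]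
  conv_rhs => rw [add_right_comm, add_assoc (∑ t ∈ range i, _), ← sum_add_distrib]
  refine congrArg₂ (· + ·) (congrArg₂ (· + ·) ?_ ?_) ?_
  · refine sum_congr rfl fun t ht => ?_
    have ht := mem_range.mp ht
    rw [tget_compTup_of_lt a b ht (by omega)]
  · refine sum_congr rfl fun s hs => ?_
    have hs := mem_range.mp hs
    rw [tget_compTup_add a b hs (by omega), lie_add]
  · refine sum_congr rfl fun t ht => ?_
    have ht := mem_range.mp ht
    rw [tget_compTup_add_add a b (by omega)]

end CompTup

end Composition

theorem special_comp_special (m n : ℕ) (i : ℕ) (hi : i < m)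
    (a : Fin m → lieF K m) (b : Fin n → lieF K n)
    (Da : DerL K m)
    (hDa : ∀ k : Fin m, Da (FreeLieAlgebra.of K k) = ⁅FreeLieAlgebra.of K k, a k⁆)
    (hDas : Da (∑ k : Fin m, FreeLieAlgebra.of K k) = 0)
    (Db : DerL K n)
    (hDb : ∀ k : Fin n, Db (FreeLieAlgebra.of K k) = ⁅FreeLieAlgebra.of K k, b k⁆)
    (hDbs : Db (∑ k : Fin n, FreeLieAlgebra.of K k) = 0)
    (Dab : DerL K (m + n - 1))
    (hDab : ∀ k : Fin (m + n - 1),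
      Dab (FreeLieAlgebra.of K k) = ⁅FreeLieAlgebra.of K k, compTup K a i b k⁆) :
    Dab (∑ k : Fin (m + n - 1), FreeLieAlgebra.of K k) = 0 := by
  rw [LieDerivation.map_sum_eq_sum_lie Dab _ _ hDab, sum_of_lie_compTup a b hi,
    ← LieDerivation.map_sum_eq_sum_lie Da _ _ hDa, hDas,
    ← LieDerivation.map_sum_eq_sum_lie Db _ _ hDb, hDbs, map_zero, map_zero, add_zero]
end

section
/- Let K be a field of characteristic zero, a, a' ∈ lie_m^m arbitrary tuples, b, b' ∈ lie_n^n tuples such that D_b and D_{b'} are special, and 1 ≤ i ≤ m. Define c ∈ lie_m^m by c_k := [a_k, a'_k] + D_a(a'_k) − D_{a'}(a_k) and d ∈ lie_n^n by d_k := [b_k, b'_k] + D_b(b'_k) − D_{b'}(b_k). Then ⁅D_{a∘_ib}, D_{a'∘_ib'}⁆ = D_{c∘_id} as derivations of lie_{m+n−1}; that is, the partial composition of tangential derivations with special derivations is a Lie algebra homomorphism. -/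
open FreeLieAlgebra

variable (K : Type) [Field K] [CharZero K]

/-! Both sides are tangential derivations of the free Lie algebra, so it suffices to compare them
on generators. For tangential `D_a`, `D_{a'}` the Jacobi identity makes `⁅D_a, D_{a'}⁆` tangential
with tuple `[a_k, a'_k] + D_a(a'_k) - D_{a'}(a_k)`, which reduces the claim to the two intertwining
relations `D_{a∘_ib} ∘ Φ_i = Φ_i ∘ D_a` and `(D_{a∘_ib} + ad Φ_i(a_i)) ∘ Ψ_i = Ψ_i ∘ D_b`.
In the first one, `Φ_i(x_i) = Ψ_i(x_1 + ⋯ + x_n)` picks up the extra term `Ψ_i(D_b(x_1 + ⋯ + x_n))`,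
which vanishes precisely because `D_b` is special. -/

namespace LieDerivation

variable {R L : Type*} [CommRing R] [LieRing L] [LieAlgebra R L]

theorem commutator_apply_of_apply_eq_lie {D D' : LieDerivation R L L} {x a a' : L}
    (h : D x = ⁅x, a⁆) (h' : D' x = ⁅x, a'⁆) :
    ⁅D, D'⁆ x = ⁅x, ⁅a, a'⁆ + D a' - D' a⁆ := by
  rw [commutator_apply, h, h', apply_lie_eq_add, apply_lie_eq_add, h, h', lie_sub, lie_add,
    leibniz_lie x a a', ← lie_skew ⁅x, a'⁆ a]
  abel

end LieDerivation

namespace FreeLieAlgebra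

variable {R X M : Type*} [CommRing R] [LieRing M] [LieAlgebra R M]

theorem lieSpan_range_of :
    LieSubalgebra.lieSpan R (FreeLieAlgebra R X) (Set.range (of R)) = ⊤ := by
  set S := LieSubalgebra.lieSpan R (FreeLieAlgebra R X) (Set.range (of R))
  let f : FreeLieAlgebra R X →ₗ⁅R⁆ S :=
    lift R fun x => ⟨of R x, LieSubalgebra.subset_lieSpan (Set.mem_range_self x)⟩
  have hf : S.incl.comp f = LieHom.id := hom_ext fun x => by simp [f]
  refine eq_top_iff.mpr fun y _ => ?_
  rw [← LieHom.id_apply (R := R) y, ← hf]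
  exact (f y).2

theorem lieDerivation_ext {D₁ D₂ : LieDerivation R (FreeLieAlgebra R X) (FreeLieAlgebra R X)}
    (h : ∀ x, D₁ (of R x) = D₂ (of R x)) : D₁ = D₂ :=
  LieDerivation.ext_of_lieSpan_eq_top _ (lieSpan_range_of (R := R))
    (by rintro _ ⟨x, rfl⟩; exact h x)

theorem lieDerivation_comp_eq_comp_lieDerivation {F : FreeLieAlgebra R X →ₗ⁅R⁆ M}
    {D : LieDerivation R M M} {E : LieDerivation R (FreeLieAlgebra R X) (FreeLieAlgebra R X)}
    (h : ∀ x, D (F (of R x)) = F (E (of R x))) (y : FreeLieAlgebra R X) : D (F y) = F (E y) := by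
  have hy : y ∈ LieSubalgebra.lieSpan R _ (Set.range (of R)) := by
    rw [lieSpan_range_of]; trivial
  induction hy using LieSubalgebra.lieSpan_induction with
  | mem _ hx => obtain ⟨x, rfl⟩ := hx; exact h x
  | zero => simp
  | add _ _ _ _ h₁ h₂ => simp [h₁, h₂]
  | smul _ _ _ h => simp [h]
  | lie _ _ _ _ h₁ h₂ =>
    simp only [LieHom.map_lie, LieDerivation.apply_lie_eq_add, h₁, h₂, map_add]

end FreeLieAlgebra

section PartialComposition

variable {K : Type} [Field K] {m n i : ℕ}

theorem PsiL_of (hi : i < m) (t : Fin n) :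
    PsiL K m n i (of K t) = of K ⟨i + t, by omega⟩ := by
  simp [PsiL, xg, show i + (t : ℕ) < m + n - 1 by omega]

theorem PhiL_of_pivot (hi : i < m) :
    PhiL K m n i (of K ⟨i, hi⟩) = PsiL K m n i (∑ t : Fin n, of K t) := by
  simp [PhiL, PsiL, map_sum]

theorem PhiL_of_ne_pivot (hi : i < m) (j : Fin m) (hj : (j : ℕ) ≠ i) :
    ∃ k, PhiL K m n i (of K j) = of K k ∧
      ∀ (a : Fin m → lieF K m) (b : Fin n → lieF K n), compTup K a i b k = PhiL K m n i (a j) := by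
  rcases Nat.lt_or_gt_of_ne hj with hji | hij
  · refine ⟨⟨j, by omega⟩, ?_, fun a b => ?_⟩
    · simp [PhiL, xg, hji, show (j : ℕ) < m + n - 1 by omega]
    · simp [compTup, tget, hji]
  · refine ⟨⟨j + n - 1, by omega⟩, ?_, fun a b => ?_⟩
    · simp [PhiL, xg, show ¬(j : ℕ) < i by omega, hj, show (j : ℕ) + n - 1 < m + n - 1 by omega]
    · simp [compTup, tget, show ¬(j : ℕ) + n - 1 < i by omega,
        show ¬(j : ℕ) + n - 1 < i + n by omega, show (j : ℕ) + n - 1 + 1 - n = j by omega]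

theorem compTup_pivot (hi : i < m) (a : Fin m → lieF K m) (b : Fin n → lieF K n) (t : Fin n) :
    compTup K a i b ⟨i + t, by omega⟩ = PhiL K m n i (a ⟨i, hi⟩) + PsiL K m n i (b t) := by
  simp [compTup, tget, hi]

theorem compTup_cases (hi : i < m) (k : Fin (m + n - 1)) :
    (∃ j : Fin m, ∀ (a : Fin m → lieF K m) (b : Fin n → lieF K n),
        compTup K a i b k = PhiL K m n i (a j)) ∨
      ∃ t : Fin n, ∀ (a : Fin m → lieF K m) (b : Fin n → lieF K n),
        compTup K a i b k = PhiL K m n i (a ⟨i, hi⟩) + PsiL K m n i (b t) := by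
  rcases Nat.lt_or_ge k i with hki | hik
  · exact .inl ⟨⟨k, by omega⟩, fun a b => by
      simp [compTup, tget, hki, show (k : ℕ) < m by omega]⟩
  rcases Nat.lt_or_ge k (i + n) with hkn | hnk
  · exact .inr ⟨⟨k - i, by omega⟩, fun a b => by
      simp [compTup, tget, hi, show ¬(k : ℕ) < i by omega, hkn, show (k : ℕ) - i < n by omega]⟩
  · exact .inl ⟨⟨k + 1 - n, by omega⟩, fun a b => by
      simp [compTup, tget, show ¬(k : ℕ) < i by omega, show ¬(k : ℕ) < i + n by omega,
        show (k : ℕ) + 1 - n < m by omega]⟩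

variable {Da Da' : DerL K m} {Db Db' : DerL K n} {U U' : DerL K (m + n - 1)}
  {a a' : Fin m → lieF K m} {b b' : Fin n → lieF K n}

theorem tangential_comp_PhiL (hi : i < m)
    (hU : ∀ k : Fin (m + n - 1), U (of K k) = ⁅of K k, compTup K a i b k⁆)
    (hDa : ∀ k : Fin m, Da (of K k) = ⁅of K k, a k⁆)
    (hDb : ∀ k : Fin n, Db (of K k) = ⁅of K k, b k⁆)
    (hDbs : Db (∑ k : Fin n, of K k) = 0) (f : lieF K m) :
    U (PhiL K m n i f) = PhiL K m n i (Da f) := by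
  refine FreeLieAlgebra.lieDerivation_comp_eq_comp_lieDerivation (fun j => ?_) f
  by_cases hj : (j : ℕ) = i
  · obtain rfl : j = ⟨i, hi⟩ := Fin.ext hj
    set A := PhiL K m n i (a ⟨i, hi⟩)
    have hΨ (t : Fin n) :
        U (PsiL K m n i (of K t)) = ⁅PsiL K m n i (of K t), A⁆ + PsiL K m n i (Db (of K t)) := by
      rw [PsiL_of hi, hU, compTup_pivot hi, lie_add, hDb, LieHom.map_lie, PsiL_of hi]
    calc U (PhiL K m n i (of K ⟨i, hi⟩))
        = ∑ t, U (PsiL K m n i (of K t)) := by rw [PhiL_of_pivot hi, map_sum, map_sum]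
      _ = ⁅PhiL K m n i (of K ⟨i, hi⟩), A⁆ + PsiL K m n i (Db (∑ t, of K t)) := by
        simp only [hΨ, Finset.sum_add_distrib, ← sum_lie, PhiL_of_pivot hi, map_sum]
      _ = PhiL K m n i (Da (of K ⟨i, hi⟩)) := by
        rw [hDbs, map_zero, add_zero, hDa, LieHom.map_lie]
  · obtain ⟨k, hk, hc⟩ := PhiL_of_ne_pivot (K := K) hi j hj
    rw [hk, hU, hc, hDa, LieHom.map_lie, hk]

theorem tangential_comp_PsiL (hi : i < m)
    (hU : ∀ k : Fin (m + n - 1), U (of K k) = ⁅of K k, compTup K a i b k⁆)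
    (hDb : ∀ k : Fin n, Db (of K k) = ⁅of K k, b k⁆) (g : lieF K n) :
    U (PsiL K m n i g) = PsiL K m n i (Db g) - ⁅PhiL K m n i (a ⟨i, hi⟩), PsiL K m n i g⁆ := by
  have key : ∀ y, (U + LieDerivation.ad K _ (PhiL K m n i (a ⟨i, hi⟩))) (PsiL K m n i y) =
      PsiL K m n i (Db y) :=
    FreeLieAlgebra.lieDerivation_comp_eq_comp_lieDerivation fun t => by
      rw [LieDerivation.add_apply, PsiL_of hi, hU, compTup_pivot hi, hDb, LieHom.map_lie,
        PsiL_of hi, LieDerivation.ad_apply_apply, lie_add, ← lie_skew (of K _)]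
      abel
  exact eq_sub_of_add_eq (by simpa using key g)

theorem compTup_commutator (hi : i < m)
    (hΦ : ∀ f, U (PhiL K m n i f) = PhiL K m n i (Da f))
    (hΦ' : ∀ f, U' (PhiL K m n i f) = PhiL K m n i (Da' f))
    (hΨ : ∀ g, U (PsiL K m n i g) =
      PsiL K m n i (Db g) - ⁅PhiL K m n i (a ⟨i, hi⟩), PsiL K m n i g⁆)
    (hΨ' : ∀ g, U' (PsiL K m n i g) =
      PsiL K m n i (Db' g) - ⁅PhiL K m n i (a' ⟨i, hi⟩), PsiL K m n i g⁆)
    (k : Fin (m + n - 1)) :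
    compTup K (fun s => ⁅a s, a' s⁆ + Da (a' s) - Da' (a s)) i
        (fun s => ⁅b s, b' s⁆ + Db (b' s) - Db' (b s)) k =
      ⁅compTup K a i b k, compTup K a' i b' k⁆ + U (compTup K a' i b' k) -
        U' (compTup K a i b k) := by
  rcases compTup_cases (K := K) hi k with ⟨j, hj⟩ | ⟨t, ht⟩
  · simp only [hj, hΦ, hΦ', map_add, map_sub, LieHom.map_lie]
  · simp only [ht, hΦ, hΦ', hΨ, hΨ', map_add, map_sub, LieHom.map_lie, lie_add, add_lie]
    rw [← lie_skew (PsiL K m n i (b t)) (PhiL K m n i (a' ⟨i, hi⟩))]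
    abel

end PartialComposition

theorem comp_is_lie_hom (m n : ℕ) (i : ℕ) (hi : i < m)
    (a a' : Fin m → lieF K m) (b b' : Fin n → lieF K n)
    (Da Da' : DerL K m)
    (hDa : ∀ k : Fin m, Da (FreeLieAlgebra.of K k) = ⁅FreeLieAlgebra.of K k, a k⁆)
    (hDa' : ∀ k : Fin m, Da' (FreeLieAlgebra.of K k) = ⁅FreeLieAlgebra.of K k, a' k⁆)
    (Db Db' : DerL K n)
    (hDb : ∀ k : Fin n, Db (FreeLieAlgebra.of K k) = ⁅FreeLieAlgebra.of K k, b k⁆)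
    (hDb' : ∀ k : Fin n, Db' (FreeLieAlgebra.of K k) = ⁅FreeLieAlgebra.of K k, b' k⁆)
    (hDbs : Db (∑ k : Fin n, FreeLieAlgebra.of K k) = 0)
    (hDb's : Db' (∑ k : Fin n, FreeLieAlgebra.of K k) = 0)
    (U U' W : DerL K (m + n - 1))
    (hU : ∀ k : Fin (m + n - 1),
      U (FreeLieAlgebra.of K k) = ⁅FreeLieAlgebra.of K k, compTup K a i b k⁆)
    (hU' : ∀ k : Fin (m + n - 1),
      U' (FreeLieAlgebra.of K k) = ⁅FreeLieAlgebra.of K k, compTup K a' i b' k⁆)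
    (hW : ∀ k : Fin (m + n - 1),
      W (FreeLieAlgebra.of K k) =
        ⁅FreeLieAlgebra.of K k,
          compTup K (fun s => ⁅a s, a' s⁆ + Da (a' s) - Da' (a s)) i
            (fun s => ⁅b s, b' s⁆ + Db (b' s) - Db' (b s)) k⁆) :
    ⁅U, U'⁆ = W := by
  have hΦ := tangential_comp_PhiL hi hU hDa hDb hDbs
  have hΦ' := tangential_comp_PhiL hi hU' hDa' hDb' hDb's
  have hΨ := tangential_comp_PsiL hi hU hDb
  have hΨ' := tangential_comp_PsiL hi hU' hDb'
  refine FreeLieAlgebra.lieDerivation_ext fun k => ?_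
  rw [hW, LieDerivation.commutator_apply_of_apply_eq_lie (hU k) (hU' k),
    compTup_commutator hi hΦ hΦ' hΨ hΨ']
end
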